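/- Ω is not typable: there is no context Δ and type α such that Δ ⊢ ΔΔ : α is derivable, where Δ = λx.xx and Ω = (λx.xx)(λx.xx). -/

import Mathlib

-- Computational and parallel types
mutual
  inductive CTy : Type
    | one : CTy
    | tens : CTy → CTy → CTy
    | arr : CTy → PTy → CTy
  inductive PTy : Type
    | ofC : CTy → PTy
    | par : PTy → PTy → PTy
end

-- Type equivalence: AC of ⊗ and ⅋, 1 neutral for ⊗
mutual
  inductive CEq : CTy → CTy → Prop
    | refl (τ) : CEq τ τ
    | symm : CEq τ ρ → CEq ρ τ
    | trans : CEq τ ρ → CEq ρ σ → CEq τ σ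
    | comm (τ ρ) : CEq (.tens τ ρ) (.tens ρ τ)
    | assoc (τ ρ σ) : CEq (.tens (.tens τ ρ) σ) (.tens τ (.tens ρ σ))
    | unit (τ) : CEq (.tens τ .one) τ
    | tensCongr : CEq τ τ' → CEq ρ ρ' → CEq (.tens τ ρ) (.tens τ' ρ')
    | arrCongr : CEq τ τ' → PEq α α' → CEq (.arr τ α) (.arr τ' α')
  inductive PEq : PTy → PTy → Prop
    | refl (α) : PEq α α
    | symm : PEq α β → PEq β α
    | trans : PEq α β → PEq β γ → PEq α γ
    | comm (α β) : PEq (.par α β) (.par β α)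
    | assoc (α β γ) : PEq (.par (.par α β) γ) (.par α (.par β γ))
    | parCongr : PEq α α' → PEq β β' → PEq (.par α β) (.par α' β')
    | ofC : CEq τ τ' → PEq (.ofC τ) (.ofC τ')
end

def Ctx : Type := ℕ → CTy
def Ctx.empty : Ctx := fun _ => CTy.one
def Ctx.tens (Γ Δ : Ctx) : Ctx := fun n => CTy.tens (Γ n) (Δ n)
def Ctx.single (x : ℕ) (τ : CTy) : Ctx := fun n => if n = x then τ else CTy.one
def Ctx.cons (τ : CTy) (Γ : Ctx) : Ctx := fun n =>
  match n with
  | 0 => τ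
  | n+1 => Γ n
def CtxEq (Γ Δ : Ctx) : Prop := ∀ n, CEq (Γ n) (Δ n)

def tensList (l : List CTy) : CTy := l.foldr CTy.tens CTy.one
def tensFin (n : ℕ) (f : Fin n → CTy) : CTy := tensList (List.ofFn f)
def tensCtxFin (n : ℕ) (Δ : Fin n → Ctx) : Ctx := fun x => tensFin n (fun i => Δ i x)

def parList : List PTy → PTy
  | [] => PTy.ofC CTy.one
  | [α] => α
  | α :: β :: rest => PTy.par α (parList (β :: rest))

def parFin (n : ℕ) (f : Fin n → PTy) : PTy := parList (List.ofFn f)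

/-- ⅋ᵏ1 : the par of k copies of 1 (left associated); junk value at 0. -/
def parOnes : ℕ → PTy
  | 0 => PTy.ofC CTy.one
  | 1 => PTy.ofC CTy.one
  | n+2 => PTy.par (parOnes (n+1)) (PTy.ofC CTy.one)

/-- Terms of Λ₊∥ in de Bruijn notation. -/
inductive Tm : Type
  | var : ℕ → Tm
  | lam : Tm → Tm
  | app : Tm → Tm → Tm
  | plus : Tm → Tm → Tm
  | par : Tm → Tm → Tm

def IsValue : Tm → Prop
  | .var _ => True
  | .lam _ => True
  | _ => False

def IsPar : Tm → Prop
  | .par _ _ => True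
  | _ => False

def shiftTm (c : ℕ) : Tm → Tm
  | .var n => if n < c then .var n else .var (n+1)
  | .lam M => .lam (shiftTm (c+1) M)
  | .app M N => .app (shiftTm c M) (shiftTm c N)
  | .plus M N => .plus (shiftTm c M) (shiftTm c N)
  | .par M N => .par (shiftTm c M) (shiftTm c N)

/-- Capture-avoiding substitution `M[V/k]` (de Bruijn). -/
def substTm : Tm → ℕ → Tm → Tm
  | .var n, k, V => if n = k then V else if k < n then .var (n-1) else .var n
  | .lam M, k, V => .lam (substTm M (k+1) (shiftTm 0 V))
  | .app M N, k, V => .app (substTm M k V) (substTm N k V)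
  | .plus M N, k, V => .plus (substTm M k V) (substTm N k V)
  | .par M N, k, V => .par (substTm M k V) (substTm N k V)

def closedUnder : ℕ → Tm → Prop
  | d, .var n => n < d
  | d, .lam M => closedUnder (d+1) M
  | d, .app M N => closedUnder d M ∧ closedUnder d N
  | d, .plus M N => closedUnder d M ∧ closedUnder d N
  | d, .par M N => closedUnder d M ∧ closedUnder d N

def Closed (M : Tm) : Prop := closedUnder 0 M

/-- One-step reduction; the boolean flag records whether a +-reduction is used. -/
inductive Step : Bool → Tm → Tm → Prop
  | beta {M V} : IsValue V → Step false (.app (.lam M) V) (substTm M 0 V)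
  | plusL (M N) : Step true (.plus M N) M
  | plusR (M N) : Step true (.plus M N) N
  | parAppL (M N P) : Step false (.app (.par M N) P) (.par (.app M P) (.app N P))
  | parAppR {V} (M N) : IsValue V → Step false (.app V (.par M N)) (.par (.app V M) (.app V N))
  | parL {b M M'} (N) : Step b M M' → Step b (.par M N) (.par M' N)
  | parR {b N N'} (M) : Step b N N' → Step b (.par M N) (.par M N')
  | appL {b M M'} (N) : Step b M M' → ¬ IsPar M → Step b (.app M N) (.app M' N)
  | appR {b M M' V} : IsValue V → Step b M M' → ¬ IsPar M → Step b (.app V M) (.app V M')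

/-- The two contracta of a single +-redex, reduced in context. -/
inductive PlusPair : Tm → Tm → Tm → Prop
  | base (M N) : PlusPair (.plus M N) M N
  | parL {M M₁ M₂} (N) : PlusPair M M₁ M₂ → PlusPair (.par M N) (.par M₁ N) (.par M₂ N)
  | parR {N N₁ N₂} (M) : PlusPair N N₁ N₂ → PlusPair (.par M N) (.par M N₁) (.par M N₂)
  | appL {M M₁ M₂} (N) : PlusPair M M₁ M₂ → ¬ IsPar M → PlusPair (.app M N) (.app M₁ N) (.app M₂ N)
  | appR {M M₁ M₂ V} : IsValue V → PlusPair M M₁ M₂ → ¬ IsPar M → PlusPair (.app V M) (.app V M₁) (.app V M₂)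

/-- n-step reduction. -/
inductive Steps : ℕ → Tm → Tm → Prop
  | refl (M) : Steps 0 M M
  | head {b M N P n} : Step b M N → Steps n N P → Steps (n+1) M P

/-- A closed term converges iff it reduces to a parallel composition of values. -/
def Converges (M : Tm) : Prop :=
  ∃ (n : ℕ) (V : Tm) (Vs : List Tm), IsValue V ∧ (∀ W ∈ Vs, IsValue W) ∧
    Steps n M (Vs.foldl Tm.par V)

/-- Typing derivations, indexed by the measure |π|. -/
inductive Deriv : Ctx → Tm → PTy → ℕ → Prop
  | ax (x : ℕ) (τ : CTy) : Deriv (Ctx.single x τ) (.var x) (.ofC τ) 0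
  | lamI (n : ℕ) (Δ : Fin n → Ctx) (τ : Fin n → CTy) (α : Fin n → PTy) (ms : Fin n → ℕ)
      (M : Tm) :
      (∀ i, Deriv (Ctx.cons (τ i) (Δ i)) M (α i) (ms i)) →
      Deriv (tensCtxFin n Δ) (.lam M)
        (.ofC (tensFin n (fun i => .arr (τ i) (α i)))) (∑ i, ms i)
  | appE (k : ℕ) (hk : 0 < k) (nf : Fin k → ℕ) (hn : ∀ i, 0 < nf i)
      (τ : ∀ i : Fin k, Fin (nf i) → CTy) (α : ∀ i : Fin k, Fin (nf i) → PTy)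
      (Δ : Ctx) (Γ : Fin k → Ctx) (m0 : ℕ) (ms : Fin k → ℕ) (M N : Tm) :
      Deriv Δ M (parFin k (fun i => .ofC (tensFin (nf i) (fun j => .arr (τ i j) (α i j))))) m0 →
      (∀ i, Deriv (Γ i) N (parFin (nf i) (fun j => .ofC (τ i j))) (ms i)) →
      Deriv (Ctx.tens Δ (tensCtxFin k Γ)) (.app M N)
        (parFin k (fun i => parFin (nf i) (α i)))
        ((m0 + (∑ i, ms i) + (∑ i, 2 * nf i)) - 1)
  | plusL {Δ M α m} (N) : Deriv Δ M α m → Deriv Δ (.plus M N) α (m+1)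
  | plusR {Δ N α m} (M) : Deriv Δ N α m → Deriv Δ (.plus M N) α (m+1)
  | parI {Δ Γ M N α β m m'} : Deriv Δ M α m → Deriv Γ N β m' →
      Deriv (Ctx.tens Δ Γ) (.par M N) (.par α β) (m + m')
  | eqv {Γ Γ' M α α' m} : Deriv Γ M α m → CtxEq Γ Γ' → PEq α α' → Deriv Γ' M α' m

def deltaTm : Tm := .lam (.app (.var 0) (.var 0))
def OmegaTm : Tm := .app deltaTm deltaTm
def Idt : Tm := .lam (.var 0)
def dstarTm : Tm := .lam (.lam (.app (.var 1) (.var 1)))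
def YstarTm : Tm := .app dstarTm dstarTm

/-!
Up to type equivalence a computational type is the ⊗ of its arrow factors `τᵢ ⊸ αᵢ`, and
`λx.M` has that type iff each `x : τᵢ ⊢ M : αᵢ` is derivable; so a typing of an abstraction can
be restricted to any subfamily of its arrows. Typing the body `x x` under `x : σ` forces
`σ ≃ (σ' ⊸ β') ⊗ σ'`. Hence from `Δ : σ` and `x : σ ⊢ x x : β` we get `Δ : σ'` and
`x : σ' ⊢ x x : β'`, where `σ'` has one arrow fewer than `σ`: an impossible descent, which a typing
of `Ω = Δ Δ` would start.
-/

def arrows : CTy → List (CTy × PTy)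
  | .one => []
  | .tens τ ρ => arrows τ ++ arrows ρ
  | .arr τ α => [(τ, α)]

def components : PTy → List CTy
  | .ofC τ => [τ]
  | .par α β => components α ++ components β

def ArrEq (p q : CTy × PTy) : Prop := CEq p.1 q.1 ∧ PEq p.2 q.2

instance : Trans CEq CEq CEq := ⟨CEq.trans⟩
instance : Trans ArrEq ArrEq ArrEq := ⟨fun h h' => ⟨h.1.trans h'.1, h.2.trans h'.2⟩⟩

theorem ArrEq.symm {p q : CTy × PTy} (h : ArrEq p q) : ArrEq q p := ⟨h.1.symm, h.2.symm⟩

theorem CEq.rel_arrows {τ ρ : CTy} (h : CEq τ ρ) :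
    Multiset.Rel ArrEq (arrows τ) (arrows ρ) := by
  have refl (l : List (CTy × PTy)) : Multiset.Rel ArrEq l l :=
    Multiset.rel_refl_of_refl_on fun _ _ => ⟨.refl _, .refl _⟩
  match h with
  | .refl _ => exact refl _
  | .symm h => exact Multiset.rel_flip.1 (h.rel_arrows.mono fun _ _ _ _ => ArrEq.symm)
  | .trans h h' => exact h.rel_arrows.trans _ h'.rel_arrows
  | .comm τ ρ =>
    simpa only [arrows, ← Multiset.coe_add, add_comm] using refl (arrows ρ ++ arrows τ)
  | .assoc τ ρ σ => simpa only [arrows, List.append_assoc] using refl _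
  | .unit τ => simpa only [arrows, List.append_nil] using refl _
  | .tensCongr h h' =>
    simpa only [arrows, ← Multiset.coe_add] using h.rel_arrows.add h'.rel_arrows
  | .arrCongr h h' => exact Multiset.Rel.cons ⟨h, h'⟩ .zero

theorem PEq.rel_components {α β : PTy} (h : PEq α β) :
    Multiset.Rel CEq (components α) (components β) := by
  have refl (l : List CTy) : Multiset.Rel CEq l l :=
    Multiset.rel_refl_of_refl_on fun _ _ => .refl _
  match h with
  | .refl _ => exact refl _
  | .symm h => exact Multiset.rel_flip.1 (h.rel_components.mono fun _ _ _ _ => CEq.symm)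
  | .trans h h' => exact h.rel_components.trans _ h'.rel_components
  | .comm α β =>
    simpa only [components, ← Multiset.coe_add, add_comm] using refl (components β ++ components α)
  | .assoc α β γ => simpa only [components, List.append_assoc] using refl _
  | .parCongr h h' =>
    simpa only [components, ← Multiset.coe_add] using h.rel_components.add h'.rel_components
  | .ofC h => exact Multiset.Rel.cons h .zero

theorem tensList_append (l l' : List CTy) :
    CEq (tensList (l ++ l')) (.tens (tensList l) (tensList l')) := by
  induction l with
  | nil => exact ((CEq.comm _ _).trans (.unit _)).symm
  | cons τ l ih => exact ((CEq.refl τ).tensCongr ih).trans (.symm (.assoc _ _ _))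

theorem ceq_tensList_arrows : ∀ τ : CTy, CEq τ (tensList ((arrows τ).map fun p => .arr p.1 p.2))
  | .one => .refl _
  | .tens τ ρ => by
    rw [arrows, List.map_append]
    exact ((ceq_tensList_arrows τ).tensCongr (ceq_tensList_arrows ρ)).trans
      (tensList_append _ _).symm
  | .arr _ _ => .symm (.unit _)

theorem arrows_tensList_map (l : List (CTy × PTy)) :
    arrows (tensList (l.map fun p => .arr p.1 p.2)) = l := by
  induction l with
  | nil => rfl
  | cons p l ih =>
    simp only [List.map_cons, tensList, List.foldr_cons, arrows] at ih ⊢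
    rw [ih]
    rfl

theorem arrows_tensFin {n : ℕ} (τ : Fin n → CTy) (α : Fin n → PTy) :
    arrows (tensFin n fun i => .arr (τ i) (α i)) = List.ofFn fun i => (τ i, α i) := by
  rw [tensFin, ← arrows_tensList_map (List.ofFn fun i => (τ i, α i)), List.map_ofFn]
  rfl

theorem components_parList_map (l : List CTy) (hl : l ≠ []) :
    components (parList (l.map .ofC)) = l := by
  induction l with
  | nil => exact absurd rfl hl
  | cons τ l ih =>
    cases l with
    | nil => rfl
    | cons ρ l =>
      simp only [List.map_cons, parList, components] at ih ⊢
      rw [ih (by simp)]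
      rfl

theorem tensFin_ceq_of_eq_one {k : ℕ} (hk : k = 1) (f : Fin k → CTy) (i : Fin k) :
    CEq (tensFin k f) (f i) := by
  subst hk
  rw [Subsingleton.elim i 0]
  exact .unit _

theorem PEq.ofC_parFin {ρ : CTy} {k : ℕ} (hk : 0 < k) {f : Fin k → CTy}
    (h : PEq (.ofC ρ) (parFin k fun i => .ofC (f i))) : k = 1 ∧ ∀ i, CEq ρ (f i) := by
  have hrel : Multiset.Rel CEq {ρ} _ := h.rel_components
  rw [parFin, show (List.ofFn fun i => PTy.ofC (f i)) = (List.ofFn f).map .ofC from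
    List.map_ofFn.symm, components_parList_map _ (by simp; omega)] at hrel
  obtain ⟨σ, s, hρσ, hs, hf⟩ := Multiset.rel_cons_left.1 hrel
  rw [Multiset.rel_zero_left.1 hs, Multiset.cons_zero, Multiset.coe_eq_singleton] at hf
  refine ⟨by simpa using congrArg List.length hf, fun i => ?_⟩
  have : f i ∈ List.ofFn f := List.mem_ofFn.2 ⟨i, rfl⟩
  rw [hf, List.mem_singleton] at this
  exact this ▸ hρσ

theorem PEq.ofC_inj {τ ρ : CTy} (h : PEq (.ofC τ) (.ofC ρ)) : CEq τ ρ :=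
  (PEq.ofC_parFin (k := 1) one_pos (f := fun _ => ρ) h).2 0

def Typable (M : Tm) (τ : CTy) : Prop := ∃ Γ m, Deriv Γ M (.ofC τ) m

def BodyTypable (M : Tm) (τ : CTy) (α : PTy) : Prop := ∃ Γ m, Deriv (Ctx.cons τ Γ) M α m

theorem Typable.congr {M : Tm} {τ ρ : CTy} (h : Typable M τ) (hτ : CEq τ ρ) : Typable M ρ :=
  let ⟨Γ, m, h⟩ := h
  ⟨Γ, m, h.eqv (fun _ => .refl _) (.ofC hτ)⟩

theorem BodyTypable.congr {M : Tm} {τ τ' : CTy} {α α' : PTy} (h : BodyTypable M τ α)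
    (hτ : CEq τ τ') (hα : PEq α α') : BodyTypable M τ' α' :=
  let ⟨Γ, m, h⟩ := h
  ⟨Γ, m, h.eqv (fun | 0 => hτ | _ + 1 => .refl _) hα⟩

theorem Deriv.var_inv {Γ : Ctx} {x : ℕ} {γ : PTy} {m : ℕ} (h : Deriv Γ (.var x) γ m) :
    ∃ ρ, CEq (Γ x) ρ ∧ PEq (.ofC ρ) γ := by
  generalize hM : Tm.var x = M at h
  induction h with
  | ax y τ =>
    cases hM
    exact ⟨τ, by rw [Ctx.single, if_pos rfl]; exact .refl _, .refl _⟩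
  | eqv _ hΓ hγ ih =>
    obtain ⟨ρ, hρ, hργ⟩ := ih hM
    exact ⟨ρ, (hΓ x).symm.trans hρ, hργ.trans hγ⟩
  | _ => cases hM

theorem Deriv.lam_inv {Γ : Ctx} {M : Tm} {γ : PTy} {m : ℕ} (h : Deriv Γ (.lam M) γ m) :
    ∃ (n : ℕ) (τ : Fin n → CTy) (α : Fin n → PTy), (∀ i, BodyTypable M (τ i) (α i)) ∧
      PEq (.ofC (tensFin n fun i => .arr (τ i) (α i))) γ := by
  generalize hM : Tm.lam M = N at h
  induction h with
  | lamI n Δ τ α ms M hbody =>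
    cases hM
    exact ⟨n, τ, α, fun i => ⟨Δ i, ms i, hbody i⟩, .refl _⟩
  | eqv _ _ hγ ih =>
    obtain ⟨n, τ, α, hbody, hτα⟩ := ih hM
    exact ⟨n, τ, α, hbody, hτα.trans hγ⟩
  | _ => cases hM

theorem Deriv.app_inv {Γ : Ctx} {M N : Tm} {γ : PTy} {m : ℕ} (h : Deriv Γ (.app M N) γ m) :
    ∃ (k : ℕ) (_ : 0 < k) (nf : Fin k → ℕ) (_ : ∀ i, 0 < nf i)
      (τ : ∀ i : Fin k, Fin (nf i) → CTy) (α : ∀ i : Fin k, Fin (nf i) → PTy)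
      (Δ : Ctx) (Γf : Fin k → Ctx) (m₀ : ℕ) (ms : Fin k → ℕ),
      Deriv Δ M (parFin k fun i => .ofC (tensFin (nf i) fun j => .arr (τ i j) (α i j))) m₀ ∧
      (∀ i, Deriv (Γf i) N (parFin (nf i) fun j => .ofC (τ i j)) (ms i)) ∧
      CtxEq (Ctx.tens Δ (tensCtxFin k Γf)) Γ := by
  generalize hMN : Tm.app M N = P at h
  induction h with
  | appE k hk nf hn τ α Δ Γf m₀ ms M N hM hN =>
    cases hMN
    exact ⟨k, hk, nf, hn, τ, α, Δ, Γf, m₀, ms, hM, hN, fun _ => .refl _⟩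
  | eqv _ hΓ _ ih =>
    obtain ⟨k, hk, nf, hn, τ, α, Δ, Γf, m₀, ms, hM, hN, hctx⟩ := ih hMN
    exact ⟨k, hk, nf, hn, τ, α, Δ, Γf, m₀, ms, hM, hN, fun x => (hctx x).trans (hΓ x)⟩
  | _ => cases hMN

theorem Deriv.var_parFin {Γ : Ctx} {x k m : ℕ} (hk : 0 < k) {f : Fin k → CTy}
    (h : Deriv Γ (.var x) (parFin k fun i => .ofC (f i)) m) : k = 1 ∧ ∀ i, CEq (Γ x) (f i) := by
  obtain ⟨ρ, hΓρ, hρ⟩ := h.var_inv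
  obtain ⟨hk1, hρf⟩ := hρ.ofC_parFin hk
  exact ⟨hk1, fun i => hΓρ.trans (hρf i)⟩

theorem Deriv.typable_of_lam_parFin {Γ : Ctx} {M : Tm} {k m : ℕ} {f : Fin k → CTy}
    (h : Deriv Γ (.lam M) (parFin k fun i => .ofC (f i)) m) (i : Fin k) :
    Typable (.lam M) (f i) := by
  obtain ⟨_, _, _, -, hT⟩ := h.lam_inv
  exact ⟨Γ, m, h.eqv (fun _ => .refl _) (hT.symm.trans (.ofC ((hT.ofC_parFin i.pos).2 i)))⟩

theorem typable_lam_iff {M : Tm} {τ : CTy} :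
    Typable (.lam M) τ ↔ ∀ p ∈ arrows τ, BodyTypable M p.1 p.2 := by
  constructor
  · rintro ⟨Γ, m, h⟩ p hp
    obtain ⟨n, σ, α, hbody, hT⟩ := h.lam_inv
    have hrel := hT.ofC_inj.rel_arrows
    rw [arrows_tensFin] at hrel
    obtain ⟨q, hq, hqp⟩ := Multiset.exists_mem_of_rel_of_mem (Multiset.rel_flip.2 hrel) hp
    obtain ⟨i, rfl⟩ := List.mem_ofFn.1 hq
    exact (hbody i).congr hqp.1 hqp.2
  · intro H
    set l := arrows τ
    choose Γ m hbody using fun j : Fin l.length => H l[j] (List.getElem_mem _)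
    refine ⟨_, _, (Deriv.lamI l.length Γ _ _ m M hbody).eqv (fun _ => .refl _) (.ofC ?_)⟩
    have hl : (List.ofFn fun j => CTy.arr l[j].1 l[j].2) = l.map fun p => .arr p.1 p.2 :=
      List.ofFn_getElem_eq_map l fun p => CTy.arr p.1 p.2
    rw [tensFin, hl]
    exact (ceq_tensList_arrows τ).symm

theorem BodyTypable.selfApp {σ : CTy} {β : PTy} (h : BodyTypable (.app (.var 0) (.var 0)) σ β) :
    ∃ σ' β', CEq σ (.tens (.arr σ' β') σ') := by
  obtain ⟨Γ, _, h⟩ := h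
  obtain ⟨k, hk, nf, hnf, τ, α, Δ, Γf, _, _, hfun, harg, hctx⟩ := h.app_inv
  let i : Fin k := ⟨0, hk⟩
  let j : Fin (nf i) := ⟨0, hnf i⟩
  obtain ⟨hk1, hΔ⟩ := hfun.var_parFin hk
  obtain ⟨hnf1, hΓf⟩ := (harg i).var_parFin (hnf i)
  refine ⟨τ i j, α i j, ?_⟩
  calc CEq σ (.tens (Δ 0) (tensFin k fun i => Γf i 0)) := (hctx 0).symm
    CEq _ (.tens (tensFin (nf i) fun j => .arr (τ i j) (α i j)) (Γf i 0)) :=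
      (hΔ i).tensCongr (tensFin_ceq_of_eq_one hk1 _ i)
    CEq _ (.tens (.arr (τ i j) (α i j)) (τ i j)) :=
      (tensFin_ceq_of_eq_one hnf1 _ j).tensCongr (hΓf j)

theorem not_bodyTypable_selfApp_of_typable_delta {σ : CTy} (hσ : Typable deltaTm σ) (β : PTy) :
    ¬ BodyTypable (.app (.var 0) (.var 0)) σ β := by
  induction hn : (arrows σ).length using Nat.strong_induction_on generalizing σ β with
  | _ n ih =>
    intro hbody
    obtain ⟨σ', β', hσσ'⟩ := hbody.selfApp
    have hbodies := typable_lam_iff.1 (hσ.congr hσσ')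
    have hσ' : Typable deltaTm σ' :=
      typable_lam_iff.2 fun p hp => hbodies p (List.mem_append_right _ hp)
    have hlen : (arrows σ).length = (arrows σ').length + 1 := by
      simpa [arrows, add_comm] using Multiset.card_eq_card_of_rel hσσ'.rel_arrows
    exact ih _ (by omega) hσ' β' rfl (hbodies (σ', β') List.mem_cons_self)

theorem omega_not_typable :
    ¬ ∃ (Δ : Ctx) (α : PTy) (m : ℕ), Deriv Δ OmegaTm α m := by
  rintro ⟨_, _, _, h⟩
  obtain ⟨k, hk, nf, hnf, τ, α, _, _, _, _, hfun, harg, -⟩ := h.app_inv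
  let i : Fin k := ⟨0, hk⟩
  let j : Fin (nf i) := ⟨0, hnf i⟩
  have hbody : BodyTypable (.app (.var 0) (.var 0)) (τ i j) (α i j) :=
    typable_lam_iff.1 (hfun.typable_of_lam_parFin i) (τ i j, α i j)
      (by rw [arrows_tensFin]; exact List.mem_ofFn.2 ⟨j, rfl⟩)
  exact not_bodyTypable_selfApp_of_typable_delta ((harg i).typable_of_lam_parFin j) _ hbody
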